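/- arXiv:2505.12378 — 2 statements merged into one kernel-verified Lean document; each statement's English description precedes it below -/
import Mathlib

section
/- Let X be an n×p real matrix with X^T X = I_p and G an n×p matrix. Define A = (1/4)‖G X^T − X G^T‖_F² and B = ‖G − X·(X^T G + G^T X)/2‖_F². Then A ≥ B/2. -/
open Matrix

/-- Squared Frobenius norm. -/
def frobSq {m n : ℕ} (A : Matrix (Fin m) (Fin n) ℝ) : ℝ := ∑ i, ∑ j, (A i j) ^ 2

lemma frobSq_eq_trace {m n : ℕ} (A : Matrix (Fin m) (Fin n) ℝ) :
    frobSq A = (Aᵀ * A).trace := by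
  simp only [frobSq, Matrix.trace, Matrix.diag, Matrix.mul_apply, Matrix.transpose_apply, sq]
  rw [Finset.sum_comm]

lemma frobSq_nonneg {m n : ℕ} (A : Matrix (Fin m) (Fin n) ℝ) : 0 ≤ frobSq A := by
  apply Finset.sum_nonneg; intro i _; apply Finset.sum_nonneg; intro j _; positivity

theorem stmt_1 (n p : ℕ) (X G : Matrix (Fin n) (Fin p) ℝ)
    (hX : Xᵀ * X = 1) :
    (1 / 4 : ℝ) * frobSq (G * Xᵀ - X * Gᵀ) ≥
      frobSq (G - X * ((1 / 2 : ℝ) • (Xᵀ * G + Gᵀ * X))) / 2 := by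
  have hXc : ∀ (C : Matrix (Fin p) (Fin p) ℝ), Xᵀ * (X * C) = C := by
    intro C; rw [← Matrix.mul_assoc, hX, Matrix.one_mul]
  have hc : (Gᵀ*(X*(Gᵀ*X))).trace = (Xᵀ*(G*(Xᵀ*G))).trace := by
    rw [← trace_transpose]
    simp only [transpose_mul, transpose_transpose, Matrix.mul_assoc]
  have hd : (Xᵀ*(G*(Gᵀ*X))).trace = (Gᵀ*(X*(Xᵀ*G))).trace := by
    rw [← Matrix.mul_assoc, trace_mul_comm]
    simp only [Matrix.mul_assoc]
  -- identity 1
  have e1 : frobSq (G * Xᵀ - X * Gᵀ)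
      = 2*(Gᵀ*G).trace - 2*(Xᵀ*(G*(Xᵀ*G))).trace := by
    rw [frobSq_eq_trace]
    have key : G * Xᵀ * (X * Gᵀ) = G * Gᵀ := by
      rw [Matrix.mul_assoc, ← Matrix.mul_assoc Xᵀ, hX, Matrix.one_mul]
    have t1 : (X * Gᵀ * (G * Xᵀ)).trace = (Gᵀ*G).trace := by
      rw [trace_mul_comm, key, trace_mul_comm]
    have t4 : (G * Xᵀ * (X * Gᵀ)).trace = (Gᵀ*G).trace := by
      rw [key, trace_mul_comm]
    have t2 : (G*Xᵀ*(G*Xᵀ)).trace = (Xᵀ*(G*(Xᵀ*G))).trace := by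
      rw [Matrix.mul_assoc, trace_mul_comm]
      simp only [Matrix.mul_assoc]
    have t3 : (X*Gᵀ*(X*Gᵀ)).trace = (Xᵀ*(G*(Xᵀ*G))).trace := by
      rw [← trace_transpose]
      simp only [transpose_mul, transpose_transpose]
      rw [← t2]
    simp only [transpose_sub, transpose_mul, transpose_transpose,
      Matrix.sub_mul, Matrix.mul_sub, trace_sub]
    rw [t1, t2, t3, t4]; ring
  -- identity 2
  have e2 : frobSq (G - X * ((1 / 2 : ℝ) • (Xᵀ * G + Gᵀ * X)))
      = (Gᵀ*G).trace - (1/2)*(Gᵀ*(X*(Xᵀ*G))).trace - (1/2)*(Xᵀ*(G*(Xᵀ*G))).trace := by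
    rw [frobSq_eq_trace]
    simp only [transpose_sub, transpose_mul, transpose_smul, transpose_add, transpose_transpose,
      Matrix.sub_mul, Matrix.mul_sub, Matrix.add_mul, Matrix.mul_add, Matrix.smul_mul,
      Matrix.mul_smul, trace_sub, trace_add, trace_smul, smul_add, smul_sub, smul_smul,
      Matrix.mul_assoc, hXc, smul_eq_mul]
    rw [hc, hd]; ring
  -- identity 3
  have e3 : frobSq (Xᵀ*G - Gᵀ*X)
      = 2*(Gᵀ*(X*(Xᵀ*G))).trace - 2*(Xᵀ*(G*(Xᵀ*G))).trace := by
    rw [frobSq_eq_trace]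
    simp only [transpose_sub, transpose_mul, transpose_transpose,
      Matrix.sub_mul, Matrix.mul_sub, trace_sub, Matrix.mul_assoc]
    rw [hc, hd]; ring
  have h3 := frobSq_nonneg (Xᵀ*G - Gᵀ*X)
  rw [e3] at h3
  rw [e1, e2]
  linarith
end

section
/- Let M be an n×n real skew-symmetric matrix, P Haar-distributed on O(n) with n ≥ 2, and 2 ≤ r ≤ n. Let P(r) denote the first r rows of P. Then E[‖P(r) M P(r)^T‖_F²] = (r(r−1))/(n(n−1)) · ‖M‖_F². -/
open Matrix MeasureTheory

/-- The product σ-algebra on matrices (entrywise). -/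
instance matrixMeasurableSpace (n m : ℕ) : MeasurableSpace (Matrix (Fin n) (Fin m) ℝ) := by
  unfold Matrix; infer_instance

/-! Conjugation `A = P M Pᵀ` by an orthogonal `P` preserves the Frobenius norm and
skew-symmetry, so `A` has zero diagonal and `∑ᵢⱼ 𝔼[A i j ^ 2] = ‖M‖_F²`. Left translation of a
Haar matrix by a permutation matrix permutes the rows and columns of `A` without changing its
law, and permutations act 2-transitively on indices, so all off-diagonal entries share one
second moment `c`. Hence `n (n - 1) c = ‖M‖_F²`, while the `r × r` corner has expected squared
Frobenius norm `r (r - 1) c`. -/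

instance (m n : ℕ) : BorelSpace (Matrix (Fin m) (Fin n) ℝ) :=
  inferInstanceAs (BorelSpace (Fin m → Fin n → ℝ))

namespace Matrix

variable {ι κ R : Type*}

theorem apply_self_eq_zero_of_transpose_eq_neg [AddGroup R] [IsAddTorsionFree R]
    {A : Matrix ι ι R} (hA : Aᵀ = -A) (i : ι) : A i i = 0 :=
  self_eq_neg.mp (congrFun (congrFun hA i) i)

theorem mul_mul_transpose_transpose_eq_neg [Fintype ι] [Fintype κ] [CommRing R]
    {M : Matrix κ κ R} (hM : Mᵀ = -M) (P : Matrix ι κ R) :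
    (P * M * Pᵀ)ᵀ = -(P * M * Pᵀ) := by
  simp [transpose_mul, hM, Matrix.mul_assoc]

theorem submatrix_mul_mul_transpose_submatrix {l : Type*} [Fintype κ]
    [NonUnitalNonAssocSemiring R] (B : Matrix ι κ R) (M : Matrix κ κ R) (e : l → ι) :
    B.submatrix e id * M * (B.submatrix e id)ᵀ = (B * M * Bᵀ).submatrix e e := by
  rw [transpose_submatrix, ← submatrix_id_id M, ← submatrix_mul _ _ _ _ _ Function.bijective_id,
    ← submatrix_mul _ _ _ _ _ Function.bijective_id]
  rfl

variable [DecidableEq ι] [Fintype ι] [NonAssocSemiring R]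

theorem transpose_permMatrix_mul_self (σ : Equiv.Perm ι) :
    (σ.permMatrix R)ᵀ * σ.permMatrix R = 1 := by
  rw [transpose_permMatrix, ← permMatrix_mul, mul_inv_cancel, permMatrix_one]

theorem permMatrix_mul_mul_transpose (σ : Equiv.Perm ι) (A : Matrix ι ι R) :
    σ.permMatrix R * A * (σ.permMatrix R)ᵀ = A.submatrix σ σ := by
  ext i j
  simp [mul_apply, Equiv.symm_apply_eq]

end Matrix

theorem frobSq_eq_trace_mul_transpose {m n : ℕ} (A : Matrix (Fin m) (Fin n) ℝ) :
    frobSq A = (A * Aᵀ).trace := by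
  simp [frobSq, trace, mul_apply, sq]

theorem sq_apply_le_frobSq {m n : ℕ} (A : Matrix (Fin m) (Fin n) ℝ) (i : Fin m) (j : Fin n) :
    A i j ^ 2 ≤ frobSq A :=
  calc A i j ^ 2 ≤ ∑ b, A i b ^ 2 :=
        Finset.single_le_sum (fun b _ => sq_nonneg (A i b)) (Finset.mem_univ j)
    _ ≤ frobSq A :=
        Finset.single_le_sum (f := fun a => ∑ b, A a b ^ 2)
          (fun _ _ => Finset.sum_nonneg fun _ _ => sq_nonneg _) (Finset.mem_univ i)

theorem frobSq_mul_mul_transpose_of_orthogonal {m n : ℕ} {P : Matrix (Fin m) (Fin n) ℝ}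
    (hP : Pᵀ * P = 1) (M : Matrix (Fin n) (Fin n) ℝ) : frobSq (P * M * Pᵀ) = frobSq M := by
  rw [frobSq_eq_trace_mul_transpose, frobSq_eq_trace_mul_transpose]
  calc (P * M * Pᵀ * (P * M * Pᵀ)ᵀ).trace = (P * (M * Mᵀ) * Pᵀ).trace := by
        simp only [transpose_mul, transpose_transpose, Matrix.mul_assoc]
        rw [← Matrix.mul_assoc Pᵀ P, hP, Matrix.one_mul]
    _ = (M * Mᵀ).trace := by
        rw [trace_mul_comm, ← Matrix.mul_assoc, hP, Matrix.one_mul]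

theorem Fintype.sum_sum_ite_eq_zero_else (ι : Type*) [Fintype ι] [DecidableEq ι] {R : Type*}
    [Ring R] (c : R) :
    ∑ i : ι, ∑ j : ι, (if i = j then 0 else c) = Fintype.card ι * (Fintype.card ι - 1 : R) * c := by
  have hrow (i : ι) : ∑ j : ι, (if i = j then 0 else c) = (Fintype.card ι - 1 : R) * c := by
    rw [Finset.sum_ite, Finset.sum_const_zero, zero_add, Finset.sum_const, Finset.filter_ne,
      Finset.card_erase_of_mem (Finset.mem_univ i), Finset.card_univ, nsmul_eq_mul,
      Nat.cast_pred (Fintype.card_pos_iff.mpr ⟨i⟩)]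
  simp only [hrow, Finset.sum_const, Finset.card_univ, nsmul_eq_mul, mul_assoc]

section RandomMatrix

variable {n : ℕ} {Ω : Type*} [MeasurableSpace Ω] {μ : Measure Ω}

theorem integral_frobSq_submatrix_of_integral_sq_apply {A : Ω → Matrix (Fin n) (Fin n) ℝ}
    {c : ℝ} (hint : ∀ i j, Integrable (fun ω => A ω i j ^ 2) μ)
    (hA : ∀ i j, ∫ ω, A ω i j ^ 2 ∂μ = if i = j then 0 else c)
    {m : ℕ} {e : Fin m → Fin n} (he : Function.Injective e) :
    ∫ ω, frobSq ((A ω).submatrix e e) ∂μ = m * (m - 1) * c := by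
  simp only [frobSq, submatrix_apply]
  rw [integral_finsetSum _ fun i _ => integrable_finsetSum _ fun j _ => hint _ _]
  simp only [integral_finsetSum _ fun j _ => hint _ _, hA, he.eq_iff]
  simpa using Fintype.sum_sum_ite_eq_zero_else (Fin m) c

variable {P : Ω → Matrix (Fin n) (Fin n) ℝ}

theorem integrable_sq_mul_mul_transpose_apply [IsFiniteMeasure μ] (hP : Measurable P)
    (horth : ∀ ω, (P ω)ᵀ * P ω = 1) (M : Matrix (Fin n) (Fin n) ℝ) (i j : Fin n) :
    Integrable (fun ω => (P ω * M * (P ω)ᵀ) i j ^ 2) μ := by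
  have hmeas : Measurable fun B : Matrix (Fin n) (Fin n) ℝ => (B * M * Bᵀ) i j ^ 2 :=
    Continuous.measurable (by fun_prop)
  refine Integrable.of_bound (hmeas.comp hP).aestronglyMeasurable (frobSq M) (ae_of_all _ ?_)
  intro ω
  rw [Real.norm_of_nonneg (sq_nonneg _), ← frobSq_mul_mul_transpose_of_orthogonal (horth ω) M]
  exact sq_apply_le_frobSq _ i j

theorem integral_sq_mul_mul_transpose_apply_eq_of_ne (hP : Measurable P)
    (hinvL : ∀ Q : Matrix (Fin n) (Fin n) ℝ, Qᵀ * Q = 1 →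
      Measure.map (fun ω => Q * P ω) μ = Measure.map P μ)
    (M : Matrix (Fin n) (Fin n) ℝ) {i j k l : Fin n} (hij : i ≠ j) (hkl : k ≠ l) :
    ∫ ω, (P ω * M * (P ω)ᵀ) i j ^ 2 ∂μ = ∫ ω, (P ω * M * (P ω)ᵀ) k l ^ 2 ∂μ := by
  obtain ⟨σ, hσk, hσl⟩ : ∃ σ : Equiv.Perm (Fin n), σ k = i ∧ σ l = j :=
    MulAction.is_two_pretransitive_iff.mp (Equiv.Perm.isMultiplyPretransitive _ 2) hkl hij
  have hf : Measurable fun B : Matrix (Fin n) (Fin n) ℝ => (B * M * Bᵀ) k l ^ 2 :=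
    Continuous.measurable (by fun_prop)
  have hσP : ProbabilityTheory.IdentDistrib (fun ω => σ.permMatrix ℝ * P ω) P μ μ :=
    ⟨(Continuous.measurable (by fun_prop) |>.comp hP).aemeasurable, hP.aemeasurable,
      hinvL _ (transpose_permMatrix_mul_self σ)⟩
  have hconj (ω : Ω) : (σ.permMatrix ℝ * P ω) * M * (σ.permMatrix ℝ * P ω)ᵀ =
      σ.permMatrix ℝ * (P ω * M * (P ω)ᵀ) * (σ.permMatrix ℝ)ᵀ := by
    simp only [transpose_mul, Matrix.mul_assoc]
  simpa only [Function.comp_def, hconj, permMatrix_mul_mul_transpose, submatrix_apply, hσk, hσl]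
    using (hσP.comp hf).integral_eq

theorem exists_integral_sq_mul_mul_transpose_apply_eq_ite (hn : 2 ≤ n)
    {M : Matrix (Fin n) (Fin n) ℝ} (hM : Mᵀ = -M) (hP : Measurable P)
    (hinvL : ∀ Q : Matrix (Fin n) (Fin n) ℝ, Qᵀ * Q = 1 →
      Measure.map (fun ω => Q * P ω) μ = Measure.map P μ) :
    ∃ c : ℝ, ∀ i j, ∫ ω, (P ω * M * (P ω)ᵀ) i j ^ 2 ∂μ = if i = j then 0 else c := by
  refine ⟨∫ ω, (P ω * M * (P ω)ᵀ) (Fin.castLE hn 0) (Fin.castLE hn 1) ^ 2 ∂μ, fun i j => ?_⟩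
  split_ifs with hij
  · simp [hij, apply_self_eq_zero_of_transpose_eq_neg (mul_mul_transpose_transpose_eq_neg hM _)]
  · exact integral_sq_mul_mul_transpose_apply_eq_of_ne hP hinvL M hij
      ((Fin.castLE_injective hn).ne zero_ne_one)

end RandomMatrix

theorem stmt_11_general (n r : ℕ) (hn : 2 ≤ n) (hr : r ≤ n)
    (M : Matrix (Fin n) (Fin n) ℝ) (hM : Mᵀ = -M)
    {Ω : Type*} [MeasurableSpace Ω] (μ : Measure Ω) [IsProbabilityMeasure μ]
    (P : Ω → Matrix (Fin n) (Fin n) ℝ) (hPmeas : Measurable P)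
    (horth : ∀ ω, (P ω)ᵀ * P ω = 1)
    -- Haar distribution: the law of `P` is invariant under left and right translation
    -- by any fixed orthogonal matrix
    (hinvL : ∀ Q : Matrix (Fin n) (Fin n) ℝ, Qᵀ * Q = 1 →
      Measure.map (fun ω => Q * P ω) μ = Measure.map P μ) :
    ∫ ω, frobSq ((P ω).submatrix (Fin.castLE hr) id * M *
        ((P ω).submatrix (Fin.castLE hr) id)ᵀ) ∂μ =
      ((r : ℝ) * (r - 1)) / ((n : ℝ) * (n - 1)) * frobSq M := by
  obtain ⟨c, hc⟩ := exists_integral_sq_mul_mul_transpose_apply_eq_ite hn hM hPmeas hinvL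
  have hint := integrable_sq_mul_mul_transpose_apply hPmeas horth (μ := μ) M
  have hcorner : ∫ ω, frobSq ((P ω).submatrix (Fin.castLE hr) id * M *
      ((P ω).submatrix (Fin.castLE hr) id)ᵀ) ∂μ = r * (r - 1) * c := by
    simp only [submatrix_mul_mul_transpose_submatrix]
    exact integral_frobSq_submatrix_of_integral_sq_apply hint hc (Fin.castLE_injective hr)
  have htotal : frobSq M = n * (n - 1) * c := by
    simpa [frobSq_mul_mul_transpose_of_orthogonal (horth _)]
      using integral_frobSq_submatrix_of_integral_sq_apply hint hc Function.injective_id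
  have hn' : (2 : ℝ) ≤ n := by exact_mod_cast hn
  rw [hcorner, htotal]
  field_simp [show (n : ℝ) - 1 ≠ 0 by linarith]

theorem stmt_11 (n r : ℕ) (hn : 2 ≤ n) (hr2 : 2 ≤ r) (hr : r ≤ n)
    (M : Matrix (Fin n) (Fin n) ℝ) (hM : Mᵀ = -M)
    {Ω : Type*} [MeasurableSpace Ω] (μ : Measure Ω) [IsProbabilityMeasure μ]
    (P : Ω → Matrix (Fin n) (Fin n) ℝ) (hPmeas : Measurable P)
    (horth : ∀ ω, (P ω)ᵀ * P ω = 1)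
    -- Haar distribution: the law of `P` is invariant under left and right translation
    -- by any fixed orthogonal matrix
    (hinvL : ∀ Q : Matrix (Fin n) (Fin n) ℝ, Qᵀ * Q = 1 →
      Measure.map (fun ω => Q * P ω) μ = Measure.map P μ)
    (hinvR : ∀ Q : Matrix (Fin n) (Fin n) ℝ, Qᵀ * Q = 1 →
      Measure.map (fun ω => P ω * Q) μ = Measure.map P μ) :
    ∫ ω, frobSq ((P ω).submatrix (Fin.castLE hr) id * M *
        ((P ω).submatrix (Fin.castLE hr) id)ᵀ) ∂μ =
      ((r : ℝ) * (r - 1)) / ((n : ℝ) * (n - 1)) * frobSq M :=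
  stmt_11_general n r hn hr M hM μ P hPmeas horth hinvL
end
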